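/- Let J satisfy (J) and define κ(x) := (1/2) ∫_{−δ}^{δ} J(y)(|x−y| − |x|) dy. Then κ is continuous and even, κ(x) = 0 for |x| ≥ δ, and 0 ≤ κ(x) ≤ (δ²/2) J(x) for all x ∈ ℝ. -/

import Mathlib

open MeasureTheory Filter Real Set

/-- `κ(x) = (1/2) ∫_{−δ}^{δ} J(y)(|x−y| − |x|) dy`. -/
noncomputable def kappa (J : ℝ → ℝ) (δ : ℝ) : ℝ → ℝ :=
  fun x => (1 / 2) * ∫ y in Set.Icc (-δ) δ, J y * (|x - y| - |x|)

/-!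
Folding the integral over `[-δ, δ]` onto `[0, δ]` with the evenness of `J` and the identity
`|x - y| + |x + y| = 2 max(|x|, |y|)` gives `κ(x) = ∫₀^δ J(y) (max(|x|, y) - |x|) dy`.
Everything follows from this formula: it is even in `x`, continuous by continuity of parametric
integrals, its integrand vanishes once `|x| ≥ δ`, and for `y ≥ |x|` monotonicity gives
`J(y) (y - |x|) ≤ J(|x|) y`, which integrates to `(δ²/2) J(x)`.
-/

theorem abs_sub_add_abs_add {α : Type*} [CommRing α] [LinearOrder α] [IsStrictOrderedRing α]
    (a b : α) : |a - b| + |a + b| = 2 * max |a| |b| := by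
  rcases le_total 0 a with ha | ha <;> rcases le_total 0 b with hb | hb <;>
    rcases le_total 0 (a - b) with h1 | h1 <;> rcases le_total 0 (a + b) with h2 | h2 <;>
    simp only [abs_of_nonneg, abs_of_nonpos, ha, hb, h1, h2, max_def] <;> split_ifs <;> linarith

theorem intervalIntegral.integral_neg_self_eq_integral_add_comp_neg {f : ℝ → ℝ}
    (hf : Continuous f) (c : ℝ) :
    ∫ y in -c..c, f y = ∫ y in 0..c, (f y + f (-y)) := by
  have hfneg : Continuous fun y => f (-y) := hf.comp continuous_neg
  rw [← intervalIntegral.integral_add_adjacent_intervals (b := 0) (hf.intervalIntegrable _ _)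
      (hf.intervalIntegrable _ _),
    intervalIntegral.integral_add (hf.intervalIntegrable _ _) (hfneg.intervalIntegrable _ _),
    intervalIntegral.integral_comp_neg, neg_zero, add_comm]

section kappa

variable {J : ℝ → ℝ} {δ : ℝ}

theorem kappa_eq_intervalIntegral_max (hδ : 0 ≤ δ) (hJ : Continuous J)
    (hJeven : ∀ x, J (-x) = J x) (x : ℝ) :
    kappa J δ x = ∫ y in 0..δ, J y * (max |x| |y| - |x|) := by
  have hcont : Continuous fun y => J y * (|x - y| - |x|) := by fun_prop
  rw [kappa, integral_Icc_eq_integral_Ioc, ← intervalIntegral.integral_of_le (by linarith),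
    intervalIntegral.integral_neg_self_eq_integral_add_comp_neg hcont,
    ← intervalIntegral.integral_const_mul]
  congr 1 with y
  rw [hJeven, sub_neg_eq_add]
  linear_combination (1 / 2 : ℝ) * J y * abs_sub_add_abs_add x y

theorem continuous_kappa (hδ : 0 ≤ δ) (hJ : Continuous J) (hJeven : ∀ x, J (-x) = J x) :
    Continuous (kappa J δ) := by
  rw [funext (kappa_eq_intervalIntegral_max hδ hJ hJeven)]
  exact intervalIntegral.continuous_parametric_intervalIntegral_of_continuous'
    (f := fun x y => J y * (max |x| |y| - |x|)) (by fun_prop) _ _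

theorem kappa_neg (hδ : 0 ≤ δ) (hJ : Continuous J) (hJeven : ∀ x, J (-x) = J x) (x : ℝ) :
    kappa J δ (-x) = kappa J δ x := by
  simp only [kappa_eq_intervalIntegral_max hδ hJ hJeven, abs_neg]

theorem kappa_eq_zero_of_le_abs (hδ : 0 ≤ δ) (hJ : Continuous J) (hJeven : ∀ x, J (-x) = J x)
    {x : ℝ} (hx : δ ≤ |x|) : kappa J δ x = 0 := by
  rw [kappa_eq_intervalIntegral_max hδ hJ hJeven]
  refine (intervalIntegral.integral_congr fun y hy => ?_).trans intervalIntegral.integral_zero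
  rw [uIcc_of_le hδ] at hy
  simp only [abs_of_nonneg hy.1, max_eq_left (hy.2.trans hx), sub_self, mul_zero]

theorem mul_max_sub_le_of_antitoneOn (hJnonneg : ∀ x, 0 ≤ J x)
    (hJanti : AntitoneOn J (Ici 0)) {a y : ℝ} (ha : 0 ≤ a) (hy : 0 ≤ y) :
    J y * (max a y - a) ≤ J a * y := by
  rcases le_total a y with hay | hya
  · rw [max_eq_right hay]
    exact mul_le_mul (hJanti ha hy hay) (by linarith) (by linarith) (hJnonneg a)
  · rw [max_eq_left hya, sub_self, mul_zero]
    exact mul_nonneg (hJnonneg a) hy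

theorem kappa_nonneg (hδ : 0 ≤ δ) (hJ : Continuous J) (hJnonneg : ∀ x, 0 ≤ J x)
    (hJeven : ∀ x, J (-x) = J x) (x : ℝ) : 0 ≤ kappa J δ x := by
  rw [kappa_eq_intervalIntegral_max hδ hJ hJeven]
  exact intervalIntegral.integral_nonneg hδ fun y _ =>
    mul_nonneg (hJnonneg y) (sub_nonneg.2 (le_max_left _ _))

theorem kappa_le (hδ : 0 ≤ δ) (hJ : Continuous J) (hJnonneg : ∀ x, 0 ≤ J x)
    (hJeven : ∀ x, J (-x) = J x) (hJanti : AntitoneOn J (Ici 0)) (x : ℝ) :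
    kappa J δ x ≤ δ ^ 2 / 2 * J x := by
  have hJabs : J |x| = J x := by
    rcases abs_choice x with h | h <;> rw [h]
    exact hJeven x
  calc kappa J δ x = ∫ y in 0..δ, J y * (max |x| |y| - |x|) :=
        kappa_eq_intervalIntegral_max hδ hJ hJeven x
    _ ≤ ∫ y in 0..δ, J |x| * y := by
        refine intervalIntegral.integral_mono_on hδ
          (Continuous.intervalIntegrable (by fun_prop) _ _)
          (Continuous.intervalIntegrable (by fun_prop) _ _) fun y hy => ?_
        rw [abs_of_nonneg hy.1]
        exact mul_max_sub_le_of_antitoneOn hJnonneg hJanti (abs_nonneg x) hy.1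
    _ = δ ^ 2 / 2 * J x := by
        rw [intervalIntegral.integral_const_mul, integral_id, hJabs]
        ring

end kappa

theorem stmt15_general (J : ℝ → ℝ) (δ : ℝ) (hδ : 0 < δ)
    (hJC1 : ContDiff ℝ 1 J) (hJnonneg : ∀ x, 0 ≤ J x)
    (hJeven : ∀ x, J (-x) = J x) (hJanti : AntitoneOn J (Set.Ici 0)) :
    Continuous (kappa J δ) ∧
    (∀ x, kappa J δ (-x) = kappa J δ x) ∧
    (∀ x : ℝ, δ ≤ |x| → kappa J δ x = 0) ∧
    (∀ x : ℝ, 0 ≤ kappa J δ x ∧ kappa J δ x ≤ δ ^ 2 / 2 * J x) := by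
  have hJ : Continuous J := hJC1.continuous
  exact ⟨continuous_kappa hδ.le hJ hJeven, kappa_neg hδ.le hJ hJeven,
    fun _ => kappa_eq_zero_of_le_abs hδ.le hJ hJeven,
    fun x => ⟨kappa_nonneg hδ.le hJ hJnonneg hJeven x, kappa_le hδ.le hJ hJnonneg hJeven hJanti x⟩⟩

/-- `κ` is continuous and even, vanishes for `|x| ≥ δ`,
and `0 ≤ κ ≤ (δ²/2) J`. -/
theorem stmt15 (J : ℝ → ℝ) (δ : ℝ) (hδ : 0 < δ)
    (hJC1 : ContDiff ℝ 1 J) (hJnonneg : ∀ x, 0 ≤ J x)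
    (hJeven : ∀ x, J (-x) = J x) (hJanti : AntitoneOn J (Set.Ici 0))
    (hJsupp : tsupport J = Set.Icc (-δ) δ) (hJint : (∫ y, J y) = 1) :
    Continuous (kappa J δ) ∧
    (∀ x, kappa J δ (-x) = kappa J δ x) ∧
    (∀ x : ℝ, δ ≤ |x| → kappa J δ x = 0) ∧
    (∀ x : ℝ, 0 ≤ kappa J δ x ∧ kappa J δ x ≤ δ ^ 2 / 2 * J x) :=
  stmt15_general J δ hδ hJC1 hJnonneg hJeven hJanti
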